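/- Let 𝒢 be an e-graph, G its converted circuit, and α a minimal satisfying evaluation of G. Define φ_α by: C ∈ dom(φ_α) and φ_α(C) = u if and only if u ∈ C and α(∧_u) = 1. Then φ_α is a well-defined extraction of 𝒢: it is a choice function, and whenever C ∈ dom(φ_α) and (φ_α(C), D) ∈ ℰ, then D ∈ dom(φ_α). -/
import Mathlib


/-- Gate types for a monotone circuit. -/
inductive Gate where
  | AND : Gate
  | OR : Gate
deriving DecidableEq

/-- A weighted cyclic monotone circuit: a directed graph with a set of outputs,
a gate-type function, and a cost function (costs are only meaningful on inputs). -/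
structure Circuit (V : Type) where
  edge : V → V → Prop
  isOut : V → Prop
  gate : V → Gate
  cost : V → ℝ

namespace Circuit

variable {V : Type}

/-- The inputs are the vertices of in-degree 0. -/
def IsInput (G : Circuit V) (u : V) : Prop := ∀ v, ¬ G.edge v u

/-- A valid evaluation: each non-input gate evaluates to its gate function applied to
the values of its in-neighbors. -/
def Valid (G : Circuit V) (α : V → Bool) : Prop :=
  ∀ u : V, ¬ G.IsInput u →
    (α u = true ↔
      match G.gate u with
      | Gate.AND => ∀ v, G.edge v u → α v = true
      | Gate.OR => ∃ v, G.edge v u ∧ α v = true)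

/-- An evaluation satisfies the circuit if it is 1 on all outputs. -/
def Satisfies (G : Circuit V) (α : V → Bool) : Prop :=
  ∀ u, G.isOut u → α u = true

/-- The restriction `α|_A`: equal to `α` on `A` and `0` (false) elsewhere. -/
noncomputable def restrict (α : V → Bool) (A : Set V) : V → Bool :=
  fun u => @ite _ (u ∈ A) (Classical.propDecidable _) (α u) false

/-- A minimal satisfying evaluation: valid, satisfying, and no restriction of its
true set to a proper subset is a valid satisfying evaluation. -/
def MinSat (G : Circuit V) (α : V → Bool) : Prop :=
  G.Valid α ∧ G.Satisfies α ∧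
    ∀ A : Set V, A ⊂ {u | α u = true} →
      ¬ (G.Valid (restrict α A) ∧ G.Satisfies (restrict α A))

/-- `α` is acyclic if the subgraph `G[α]` induced by the true vertices has no
directed cycle. -/
def EvalAcyclic (G : Circuit V) (α : V → Bool) : Prop :=
  ∀ u, ¬ Relation.TransGen (fun a b => G.edge a b ∧ α a = true ∧ α b = true) u u

end Circuit

/-- An e-graph: a finite set `N` of e-nodes partitioned into e-classes (indexed by the
type `C`, via the surjective class map `cls`), a dependency relation `edge ⊆ N × C`,
a set of output classes, and a cost function. -/
structure EGraph (N C : Type) where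
  cls : N → C
  surj : Function.Surjective cls
  edge : N → C → Prop
  isOut : C → Prop
  cost : N → ℝ

namespace EGraph

variable {N C : Type}

/-- An extraction, modeled as a partial function `C → Option N`: a choice function
(on its domain) closed under dependencies. -/
def IsExtraction (𝒢 : EGraph N C) (φ : C → Option N) : Prop :=
  (∀ D u, φ D = some u → 𝒢.cls u = D) ∧
  (∀ D u D', φ D = some u → 𝒢.edge u D' → (φ D').isSome)

/-- A satisfying extraction: an extraction whose domain contains all output classes. -/
def SatExtraction (𝒢 : EGraph N C) (φ : C → Option N) : Prop :=
  𝒢.IsExtraction φ ∧ ∀ D, 𝒢.isOut D → (φ D).isSome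

/-- The restriction `φ|_𝒜` of an extraction to a set of classes. -/
noncomputable def restrictExt (φ : C → Option N) (𝒜 : Set C) : C → Option N :=
  fun D => @ite _ (D ∈ 𝒜) (Classical.propDecidable _) (φ D) none

/-- A minimally satisfying extraction: satisfying, and no restriction to a proper
subset of its domain is a satisfying extraction. -/
def MinSatExtraction (𝒢 : EGraph N C) (φ : C → Option N) : Prop :=
  𝒢.SatExtraction φ ∧
    ∀ 𝒜 : Set C, 𝒜 ⊂ {D | (φ D).isSome = true} →
      ¬ 𝒢.SatExtraction (restrictExt φ 𝒜)

/-- An extraction is acyclic if there is no (nontrivial) selected path from a class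
to itself. -/
def ExtAcyclic (𝒢 : EGraph N C) (φ : C → Option N) : Prop :=
  ∀ D, ¬ Relation.TransGen (fun D₁ D₂ => ∃ u, φ D₁ = some u ∧ 𝒢.edge u D₂) D D

/-- Vertices of the converted circuit: an input `x_u` and an AND gate `∧_u` for each
e-node `u`, and an OR gate `∨_D` for each e-class `D`. -/
inductive Vtx (N C : Type) where
  | x : N → Vtx N C
  | and : N → Vtx N C
  | or : C → Vtx N C

/-- The converted circuit of an e-graph: edges `(∧_u, ∨_D)` for `u ∈ D`,
`(∨_D, ∧_u)` for `(u, D) ∈ ℰ`, and `(x_u, ∧_u)`; outputs `∨_D` for output classes `D`;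
gate types AND on `∧_u`, OR on `∨_D`; cost `c(x_u) = c(u)`. -/
def conv (𝒢 : EGraph N C) : Circuit (Vtx N C) where
  edge a b :=
    match a, b with
    | .and u, .or D => 𝒢.cls u = D
    | .or D, .and u => 𝒢.edge u D
    | .x u, .and v => u = v
    | _, _ => False
  isOut a :=
    match a with
    | .or D => 𝒢.isOut D
    | _ => False
  gate a :=
    match a with
    | .or _ => Gate.OR
    | _ => Gate.AND
  cost a :=
    match a with
    | .x u => 𝒢.cost u
    | _ => 0

/-- The evaluation `α_φ` associated to an extraction `φ`:
`α_φ(x_u) = α_φ(∧_u) = 1` iff `φ(cls u) = u`, and `α_φ(∨_D) = 1` iff `D ∈ dom φ`. -/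
noncomputable def evalOf (𝒢 : EGraph N C) (φ : C → Option N) : Vtx N C → Bool :=
  fun a =>
    match a with
    | .x u => @decide (φ (𝒢.cls u) = some u) (Classical.propDecidable _)
    | .and u => @decide (φ (𝒢.cls u) = some u) (Classical.propDecidable _)
    | .or D => (φ D).isSome

/-- The extraction `φ_α` associated to an evaluation `α`:
`D ∈ dom φ_α` and `φ_α(D) = u` iff `u ∈ D` and `α(∧_u) = 1`. -/
noncomputable def extOf (𝒢 : EGraph N C) (α : Vtx N C → Bool) : C → Option N :=
  fun D =>
    @dite _ (∃ u, 𝒢.cls u = D ∧ α (Vtx.and u) = true) (Classical.propDecidable _)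
      (fun h => some h.choose) (fun _ => none)

end EGraph


open EGraph Circuit in
lemma stmt6_unique {N C : Type} (𝒢 : EGraph N C)
    (α : EGraph.Vtx N C → Bool) (hα : (𝒢.conv).MinSat α) {u v : N}
    (hc : 𝒢.cls u = 𝒢.cls v)
    (hu : α (EGraph.Vtx.and u) = true) (hv : α (EGraph.Vtx.and v) = true) : u = v := by
  by_contra hne
  obtain ⟨hval, hsat, hmin⟩ := hα
  set A : Set (Vtx N C) := {w | α w = true} \ {Vtx.and u, Vtx.x u} with hA
  set β := Circuit.restrict α A with hβdef
  have hβ : ∀ w, β w = true ↔ (α w = true ∧ w ≠ Vtx.and u ∧ w ≠ Vtx.x u) := by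
    intro w
    unfold β
    unfold Circuit.restrict
    split
    · rename_i h
      simp only [hA, Set.mem_diff, Set.mem_setOf_eq, Set.mem_insert_iff,
        Set.mem_singleton_iff] at h
      constructor
      · intro hw; exact ⟨hw, fun e => h.2 (Or.inl e), fun e => h.2 (Or.inr e)⟩
      · intro hw; exact hw.1
    · rename_i h
      simp only [hA, Set.mem_diff, Set.mem_setOf_eq, Set.mem_insert_iff,
        Set.mem_singleton_iff, not_and, not_not] at h
      constructor
      · intro hw; simp at hw
      · intro hw
        rcases h hw.1 with e | e
        · exact absurd e hw.2.1
        · exact absurd e hw.2.2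
  refine hmin A ?_ ⟨?_, ?_⟩
  · constructor
    · intro w hw; exact hw.1
    · intro hsub
      have : Vtx.and u ∈ A := hsub hu
      exact this.2 (Or.inl rfl)
  · -- validity of β
    intro w hw
    match w with
    | Vtx.x n =>
      exact absurd (fun z hz => by cases z <;> exact hz) hw
    | Vtx.and n =>
      show β (Vtx.and n) = true ↔ ∀ z, 𝒢.conv.edge z (Vtx.and n) → β z = true
      by_cases hn : n = u
      · subst hn
        constructor
        · intro h; exact absurd ((hβ _).mp h).2.1 (by simp)
        · intro h
          have hx : β (Vtx.x n) = true := h (Vtx.x n) rfl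
          exact absurd ((hβ _).mp hx).2.2 (by simp)
      · have base : α (Vtx.and n) = true ↔ ∀ z, 𝒢.conv.edge z (Vtx.and n) → α z = true :=
          hval (Vtx.and n) (fun h => h (Vtx.x n) rfl)
        rw [hβ]
        constructor
        · intro h z hz
          have hz' : α z = true := base.mp h.1 z hz
          rw [hβ]
          cases z with
          | x m =>
            have hm : m = n := hz
            subst hm
            exact ⟨hz', by simp, by simp [hn]⟩
          | and m => exact (hz : False).elim
          | or E => exact ⟨hz', by simp, by simp⟩
        · intro h
          refine ⟨base.mpr (fun z hz => ((hβ _).mp (h z hz)).1), by simp [hn], by simp⟩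
    | Vtx.or D =>
      show β (Vtx.or D) = true ↔ ∃ z, 𝒢.conv.edge z (Vtx.or D) ∧ β z = true
      have hnin : ¬ 𝒢.conv.IsInput (Vtx.or D) := by
        intro h
        obtain ⟨m, hm⟩ := 𝒢.surj D
        exact h (Vtx.and m) hm
      have base : α (Vtx.or D) = true ↔ ∃ z, 𝒢.conv.edge z (Vtx.or D) ∧ α z = true :=
        hval (Vtx.or D) hnin
      rw [hβ]
      constructor
      · intro h
        obtain ⟨z, hz, hza⟩ := base.mp h.1
        match z with
        | Vtx.and m =>
          by_cases hm : m = u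
          · subst hm
            have hDv : 𝒢.cls v = D := hc ▸ hz
            refine ⟨Vtx.and v, hDv, ?_⟩
            rw [hβ]
            exact ⟨hv, by simp [Ne.symm hne], by simp⟩
          · refine ⟨Vtx.and m, hz, ?_⟩
            rw [hβ]
            exact ⟨hza, by simp [hm], by simp⟩
      · intro ⟨z, hz, hzb⟩
        exact ⟨base.mpr ⟨z, hz, ((hβ _).mp hzb).1⟩, by simp, by simp⟩
  · -- satisfies
    intro w hw
    match w with
    | Vtx.or D =>
      rw [hβ]
      exact ⟨hsat _ hw, by simp, by simp⟩

/-- for a minimal satisfying evaluation `α` of the converted circuit, the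
map `φ_α` (characterized by `φ_α(D) = u` iff `u ∈ D` and `α(∧_u) = 1`) is a
well-defined extraction: such a partial function exists, is a choice function, and is
closed under dependencies. -/
theorem stmt6 {N C : Type} [Fintype N] [Fintype C] (𝒢 : EGraph N C)
    (α : EGraph.Vtx N C → Bool) (hα : (𝒢.conv).MinSat α) :
    ∃ φ : C → Option N,
      (∀ (D : C) (u : N), φ D = some u ↔ 𝒢.cls u = D ∧ α (EGraph.Vtx.and u) = true) ∧
      𝒢.IsExtraction φ := by
  classical
  obtain ⟨hval, hsat, hmin⟩ := hα
  have key : ∀ (D : C) (u : N), 𝒢.extOf α D = some u ↔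
      𝒢.cls u = D ∧ α (EGraph.Vtx.and u) = true := by
    intro D u
    unfold EGraph.extOf
    split
    · rename_i h
      have hch := h.choose_spec
      constructor
      · intro he
        have : h.choose = u := by injection he
        exact this ▸ hch
      · intro ⟨h1, h2⟩
        have : h.choose = u :=
          stmt6_unique 𝒢 α ⟨hval, hsat, hmin⟩ (hch.1.trans h1.symm) hch.2 h2
        rw [this]
    · rename_i h
      constructor
      · intro he; simp at he
      · intro ⟨h1, h2⟩; exact absurd ⟨u, h1, h2⟩ h
  refine ⟨𝒢.extOf α, key, ?_, ?_⟩
  · intro D u h; exact ((key D u).mp h).1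
  · intro D u D' h he
    obtain ⟨h1, h2⟩ := (key D u).mp h
    have hnin : ¬ 𝒢.conv.IsInput (EGraph.Vtx.and u) := fun h => h (EGraph.Vtx.x u) rfl
    have band : α (EGraph.Vtx.and u) = true ↔
        ∀ z, 𝒢.conv.edge z (EGraph.Vtx.and u) → α z = true := hval _ hnin
    have hor : α (EGraph.Vtx.or D') = true := band.mp h2 (EGraph.Vtx.or D') he
    have hnin' : ¬ 𝒢.conv.IsInput (EGraph.Vtx.or D') := by
      intro h
      obtain ⟨m, hm⟩ := 𝒢.surj D'
      exact h (EGraph.Vtx.and m) hm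
    have bor : α (EGraph.Vtx.or D') = true ↔
        ∃ z, 𝒢.conv.edge z (EGraph.Vtx.or D') ∧ α z = true := hval _ hnin'
    obtain ⟨z, hz, hza⟩ := bor.mp hor
    match z with
    | EGraph.Vtx.and m =>
      have : 𝒢.extOf α D' = some m := (key D' m).mpr ⟨hz, hza⟩
      rw [this]; rfl
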